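/- arXiv:2208.01986 — 2 statements merged into one kernel-verified Lean document; each statement's English description precedes it below -/
import Mathlib

section
/- Spec_S R is connected with respect to the S-flat topology if and only if Spec_S R is connected with respect to the S-Zariski topology. -/
/-- An ideal `P` is `S`-prime if `P ∩ S = ∅` and there is `s ∈ S` such that
whenever `a * b ∈ P`, either `s * a ∈ P` or `s * b ∈ P`. -/
def IsSPrime {R : Type*} [CommRing R] (S : Set R) (P : Ideal R) : Prop :=
  (P : Set R) ∩ S = ∅ ∧ ∃ s ∈ S, ∀ a b : R, a * b ∈ P → s * a ∈ P ∨ s * b ∈ P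

/-- The `S`-prime spectrum `Spec_S R`: the set of all `S`-prime ideals of `R`. -/
def SSpec {R : Type*} [CommRing R] (S : Set R) : Type _ :=
  {P : Ideal R // IsSPrime S P}

/-- The `S`-variety of an ideal `I`:
`V_S(I) = {P ∈ Spec_S R | s • I ⊆ P for some s ∈ S}`. -/
def SVar {R : Type*} [CommRing R] (S : Set R) (I : Ideal R) : Set (SSpec S) :=
  {P | ∃ s ∈ S, ∀ x ∈ I, s * x ∈ P.1}

/-- The `S`-radical of an ideal `I`:
`√[S](I) = {a ∈ R | s * a ^ n ∈ I for some s ∈ S, n ∈ ℕ}`. -/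
def SRad {R : Type*} [CommRing R] (S : Set R) (I : Ideal R) : Set R :=
  {a | ∃ s ∈ S, ∃ n : ℕ, s * a ^ n ∈ I}

/-- The `S`-Zariski topology on `Spec_S R`: the closed sets are exactly the `V_S(I)`. -/
def sZariskiTop {R : Type*} [CommRing R] (S : Set R) : TopologicalSpace (SSpec S) :=
  TopologicalSpace.generateFrom {U | ∃ I : Ideal R, U = (SVar S I)ᶜ}

/-- The `S`-flat topology on `Spec_S R`: the coarsest topology in which every
`V_S(f)`, `f ∈ R`, is open. -/
def sFlatTop {R : Type*} [CommRing R] (S : Set R) : TopologicalSpace (SSpec S) :=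
  TopologicalSpace.generateFrom {U | ∃ f : R, U = SVar S (Ideal.span {f})}

/-- An ideal `I` is `S`-radically finite if `√[S](I) = √[S](J)` for some finitely
generated ideal `J`. -/
def SRadFinite {R : Type*} [CommRing R] (S : Set R) (I : Ideal R) : Prop :=
  ∃ J : Ideal R, J.FG ∧ SRad S I = SRad S J

open Set TopologicalSpace

namespace SConnAux

variable {R : Type*} [CommRing R] {S : Set R}

theorem notMem_of_mem_S (P : SSpec S) {x : R} (hx : x ∈ S) : x ∉ P.1 := by
  intro hxP
  have h := P.2.1
  rw [Set.eq_empty_iff_forall_notMem] at h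
  exact h x ⟨hxP, hx⟩

/-- Every `S`-prime `P` has an associated prime `Q` disjoint from `S` such that
`P ∈ V_S(I) ↔ I ≤ Q` for all ideals `I`. -/
theorem rep (hSmul : ∀ s ∈ S, ∀ t ∈ S, s * t ∈ S) (P : SSpec S) :
    ∃ Q : Ideal R, Q.IsPrime ∧ (∀ x ∈ S, x ∉ Q) ∧ ∀ I : Ideal R, (P ∈ SVar S I ↔ I ≤ Q) := by
  obtain ⟨hdis, s, hsS, hs⟩ := P.2
  have hP : ∀ x ∈ S, x ∉ P.1 := fun x hx => notMem_of_mem_S P hx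
  have key : ∀ a : R, a ∈ P.1.colon (Ideal.span {s}) ↔ a * s ∈ P.1 := fun a =>
    Ideal.mem_colon_span_singleton
  have hss : s * s ∈ S := hSmul s hsS s hsS
  have hsss : s * (s * s) ∈ S := hSmul s hsS _ hss
  refine ⟨P.1.colon (Ideal.span {s}), Ideal.isPrime_iff.mpr ⟨?_, ?_⟩, ?_, ?_⟩
  · intro h
    have h1 : (1 : R) ∈ P.1.colon (Ideal.span {s}) := h ▸ Submodule.mem_top
    rw [key, one_mul] at h1
    exact hP s hsS h1
  · intro a b hab
    rw [key] at hab
    have h1 : a * (b * s) ∈ P.1 := by rw [show a * (b * s) = a * b * s by ring]; exact hab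
    rcases hs a (b * s) h1 with h2 | h2
    · left; rw [key, mul_comm]; exact h2
    · have h3 : b * (s * s) ∈ P.1 := by rw [show b * (s * s) = s * (b * s) by ring]; exact h2
      rcases hs b (s * s) h3 with h4 | h4
      · right; rw [key, mul_comm]; exact h4
      · exact absurd h4 (hP _ hsss)
  · intro x hxS hxQ
    rw [key] at hxQ
    exact hP _ (hSmul x hxS s hsS) hxQ
  · intro I
    constructor
    · rintro ⟨t, htS, ht⟩ x hxI
      rw [key]
      rcases hs t x (ht x hxI) with h | h
      · exact absurd h (hP _ (hSmul s hsS t htS))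
      · rwa [mul_comm] at h
    · intro hIQ
      exact ⟨s, hsS, fun x hx => by
        have h := hIQ hx; rw [key, mul_comm] at h; exact h⟩

theorem isSPrime_of_prime (hS1 : (1 : R) ∈ S) {Q : Ideal R} (hQ : Q.IsPrime)
    (hdis : ∀ x ∈ S, x ∉ Q) : IsSPrime S Q := by
  refine ⟨?_, 1, hS1, fun a b hab => ?_⟩
  · rw [Set.eq_empty_iff_forall_notMem]; rintro x ⟨h1, h2⟩; exact hdis x h2 h1
  · rcases hQ.mem_or_mem hab with h | h
    · left; rwa [one_mul]
    · right; rwa [one_mul]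

theorem mem_SVar_of_prime (hS1 : (1 : R) ∈ S) {Q : Ideal R} (hQ : Q.IsPrime)
    (hdis : ∀ x ∈ S, x ∉ Q) {P : SSpec S} (hPQ : P.1 = Q) {I : Ideal R} :
    P ∈ SVar S I ↔ I ≤ Q := by
  constructor
  · rintro ⟨t, htS, ht⟩ x hx
    have h := ht x hx; rw [hPQ] at h
    exact (hQ.mem_or_mem h).resolve_left (hdis t htS)
  · intro h
    exact ⟨1, hS1, fun x hx => by rw [hPQ, one_mul]; exact h hx⟩

theorem SVar_empty_of_mem (hSmul : ∀ s ∈ S, ∀ t ∈ S, s * t ∈ S) {K : Ideal R} {u : R}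
    (huS : u ∈ S) (huK : u ∈ K) : SVar S K = ∅ := by
  rw [eq_empty_iff_forall_notMem]
  rintro P ⟨t, htS, ht⟩
  exact notMem_of_mem_S P (hSmul t htS u huS) (ht u huK)

theorem exists_mem_of_SVar_empty (hS1 : (1 : R) ∈ S) (hSmul : ∀ s ∈ S, ∀ t ∈ S, s * t ∈ S)
    {K : Ideal R} (h : SVar S K = ∅) : ∃ u ∈ S, u ∈ K := by
  by_contra hc
  push_neg at hc
  let K' : Ideal R :=
    { carrier := {r | ∃ s ∈ S, s * r ∈ K}
      add_mem' := by
        rintro a b ⟨s, hsS, hsa⟩ ⟨t, htS, htb⟩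
        refine ⟨s * t, hSmul s hsS t htS, ?_⟩
        rw [show s * t * (a + b) = t * (s * a) + s * (t * b) by ring]
        exact K.add_mem (K.mul_mem_left _ hsa) (K.mul_mem_left _ htb)
      zero_mem' := ⟨1, hS1, by simpa using K.zero_mem⟩
      smul_mem' := by
        rintro c x ⟨s, hsS, hsx⟩
        refine ⟨s, hsS, ?_⟩
        rw [smul_eq_mul, show s * (c * x) = c * (s * x) by ring]
        exact K.mul_mem_left _ hsx }
  let M : Submonoid R := ⟨⟨S, fun {a b} ha hb => hSmul a ha b hb⟩, hS1⟩
  have hdisj : Disjoint (K' : Set R) (M : Set R) := by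
    rw [Set.disjoint_left]
    rintro x ⟨s, hsS, hsx⟩ hxM
    exact hc (s * x) (hSmul s hsS x hxM) hsx
  obtain ⟨p, hp, hKp, hpd⟩ := Ideal.exists_le_prime_disjoint (I := K') M hdisj
  have hdis' : ∀ x ∈ S, x ∉ p := fun x hx hxp =>
    Set.disjoint_left.mp hpd hxp (show x ∈ (M : Set R) from hx)
  have hmem : (⟨p, isSPrime_of_prime hS1 hp hdis'⟩ : SSpec S) ∈ SVar S K :=
    ⟨1, hS1, fun x hx => by
      rw [one_mul]
      exact hKp ⟨1, hS1, by rwa [one_mul]⟩⟩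
  rw [h] at hmem
  exact hmem


theorem exists_smul_pow_eq_zero (hS0 : (0 : R) ∉ S) (hS1 : (1 : R) ∈ S)
    (hSmul : ∀ s ∈ S, ∀ t ∈ S, s * t ∈ S) {a : R}
    (h : ∀ Q : Ideal R, Q.IsPrime → (∀ x ∈ S, x ∉ Q) → a ∈ Q) :
    ∃ t ∈ S, ∃ n : ℕ, t * a ^ (n + 1) = 0 := by
  by_contra hc
  push_neg at hc
  let T : Submonoid R :=
    { carrier := {x | ∃ s ∈ S, ∃ n : ℕ, x = s * a ^ n}
      one_mem' := ⟨1, hS1, 0, by simp⟩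
      mul_mem' := by
        rintro x y ⟨s, hsS, m, rfl⟩ ⟨t, htS, n, rfl⟩
        exact ⟨s * t, hSmul s hsS t htS, m + n, by rw [pow_add]; ring⟩ }
  have hdisj : Disjoint ((⊥ : Ideal R) : Set R) (T : Set R) := by
    rw [Set.disjoint_left]
    rintro x hx ⟨s, hsS, n, rfl⟩
    rw [SetLike.mem_coe, Ideal.mem_bot] at hx
    rcases n with _ | n
    · rw [pow_zero, mul_one] at hx
      exact hS0 (hx ▸ hsS)
    · exact hc s hsS n hx
  obtain ⟨p, hp, _, hpd⟩ := Ideal.exists_le_prime_disjoint (I := (⊥ : Ideal R)) T hdisj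
  have hdis' : ∀ x ∈ S, x ∉ p := fun x hx hxp =>
    Set.disjoint_left.mp hpd hxp (show x ∈ (T : Set R) from ⟨x, hx, 0, by simp⟩)
  have ha : a ∈ p := h p hp hdis'
  exact Set.disjoint_left.mp hpd ha (show a ∈ (T : Set R) from ⟨1, hS1, 1, by simp⟩)

theorem add_pow_split (i j : R) (n : ℕ) :
    ∃ u v : R, (i + j) ^ (2 * n) = i ^ n * u + j ^ n * v := by
  have H : (i + j) ^ (2 * n) ∈ Ideal.span {i ^ n} ⊔ Ideal.span {j ^ n} := by
    rw [add_pow]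
    refine Submodule.sum_mem _ fun k hk => ?_
    rw [Finset.mem_range] at hk
    rcases le_or_gt n k with hle | hlt
    · exact Ideal.mem_sup_left (Ideal.mem_span_singleton.mpr
        (((pow_dvd_pow i hle).mul_right _).mul_right _))
    · have hn : n ≤ 2 * n - k := by omega
      exact Ideal.mem_sup_right (Ideal.mem_span_singleton.mpr
        (((pow_dvd_pow j hn).mul_left _).mul_right _))
  rcases Submodule.mem_sup.mp H with ⟨y, hy, z, hz, hyz⟩
  rcases Ideal.mem_span_singleton'.mp hy with ⟨u, hu⟩
  rcases Ideal.mem_span_singleton'.mp hz with ⟨v, hv⟩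
  exact ⟨u, v, by rw [← hyz, ← hu, ← hv]; ring⟩

theorem SVar_mul (hSmul : ∀ s ∈ S, ∀ t ∈ S, s * t ∈ S) (I J : Ideal R) :
    SVar S (I * J) = SVar S I ∪ SVar S J := by
  ext P
  obtain ⟨Q, hQ, _, hiff⟩ := rep hSmul P
  simp only [mem_union, hiff]
  exact hQ.mul_le

theorem SVar_sSup (hSmul : ∀ s ∈ S, ∀ t ∈ S, s * t ∈ S) (T : Set (Ideal R)) :
    SVar S (sSup T) = ⋂ I ∈ T, SVar S I := by
  ext P
  obtain ⟨Q, _, _, hiff⟩ := rep hSmul P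
  simp only [mem_iInter, hiff]
  exact sSup_le_iff

/-- The core partition lemma: a partition of `Spec_S R` into two `S`-varieties comes from a
pair `e₁, e₂` with `e₁ * e₂ = 0` and `e₁ + e₂ ∈ S`. -/
theorem exists_pair (hS0 : (0 : R) ∉ S) (hS1 : (1 : R) ∈ S)
    (hSmul : ∀ s ∈ S, ∀ t ∈ S, s * t ∈ S) {I J : Ideal R}
    (hdisj : SVar S I ∩ SVar S J = ∅) (huniv : SVar S I ∪ SVar S J = univ) :
    ∃ e₁ e₂ : R, e₁ * e₂ = 0 ∧ e₁ + e₂ ∈ S ∧ SVar S I = SVar S (Ideal.span {e₁}) ∧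
      SVar S J = SVar S (Ideal.span {e₂}) := by
  have h1 : SVar S (I ⊔ J) = ∅ := by
    rw [eq_empty_iff_forall_notMem]
    intro P hP
    obtain ⟨Q, _, _, hiff⟩ := rep hSmul P
    have hle := (hiff _).mp hP
    have hmem : P ∈ SVar S I ∩ SVar S J :=
      ⟨(hiff I).mpr (le_trans le_sup_left hle), (hiff J).mpr (le_trans le_sup_right hle)⟩
    rw [hdisj] at hmem
    exact hmem
  obtain ⟨s₀, hs₀S, hs₀⟩ := exists_mem_of_SVar_empty hS1 hSmul h1
  obtain ⟨i, hiI, j, hjJ, hij⟩ := Submodule.mem_sup.mp hs₀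
  have h2 : ∀ Q : Ideal R, Q.IsPrime → (∀ x ∈ S, x ∉ Q) → i * j ∈ Q := by
    intro Q hQ hd
    have hPt : (⟨Q, isSPrime_of_prime hS1 hQ hd⟩ : SSpec S) ∈ SVar S I ∪ SVar S J :=
      huniv ▸ mem_univ _
    rcases hPt with h | h
    · exact Q.mul_mem_right j ((mem_SVar_of_prime hS1 hQ hd rfl).mp h hiI)
    · exact Q.mul_mem_left i ((mem_SVar_of_prime hS1 hQ hd rfl).mp h hjJ)
  obtain ⟨t, htS, n, htn⟩ := exists_smul_pow_eq_zero hS0 hS1 hSmul h2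
  set m := n + 1 with hm
  obtain ⟨u, v, huv⟩ := add_pow_split i j m
  set e₁ := t * (i ^ m * u) with he₁
  set e₂ := t * (j ^ m * v) with he₂
  have hzero : e₁ * e₂ = 0 := by
    have hc : e₁ * e₂ = t * (i * j) ^ m * (t * u * v) := by rw [mul_pow]; ring
    rw [hc, htn, zero_mul]
  have hsumS : e₁ + e₂ ∈ S := by
    have hsum : e₁ + e₂ = t * (i + j) ^ (2 * m) := by rw [huv]; ring
    rw [hsum, hij]
    have hpow : ∀ k : ℕ, s₀ ^ k ∈ S := by
      intro k
      induction k with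
      | zero => simpa using hS1
      | succ k ih => rw [pow_succ]; exact hSmul _ ih _ hs₀S
    exact hSmul t htS _ (hpow _)
  have he₁I : e₁ ∈ I := I.mul_mem_left t (I.mul_mem_right u (I.pow_mem_of_mem hiI m (by omega)))
  have he₂J : e₂ ∈ J := J.mul_mem_left t (J.mul_mem_right v (J.pow_mem_of_mem hjJ m (by omega)))
  have hU : ∀ P : SSpec S, P ∈ SVar S (Ideal.span {e₁}) ∨ P ∈ SVar S (Ideal.span {e₂}) := by
    intro P
    obtain ⟨Q, hQ, _, hiff⟩ := rep hSmul P
    have h0 : e₁ * e₂ ∈ Q := hzero ▸ Q.zero_mem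
    rcases hQ.mem_or_mem h0 with h | h
    · exact Or.inl ((hiff _).mpr ((Ideal.span_singleton_le_iff_mem _).mpr h))
    · exact Or.inr ((hiff _).mpr ((Ideal.span_singleton_le_iff_mem _).mpr h))
  have hInt : ∀ P : SSpec S, P ∈ SVar S (Ideal.span {e₁}) → P ∈ SVar S (Ideal.span {e₂}) →
      False := by
    intro P hp1 hp2
    obtain ⟨Q, _, hd, hiff⟩ := rep hSmul P
    exact hd _ hsumS (Q.add_mem ((hiff _).mp hp1 (Ideal.mem_span_singleton_self e₁))
      ((hiff _).mp hp2 (Ideal.mem_span_singleton_self e₂)))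
  have hsub1 : SVar S I ⊆ SVar S (Ideal.span {e₁}) := by
    intro P hP
    obtain ⟨Q, _, _, hiff⟩ := rep hSmul P
    exact (hiff _).mpr ((Ideal.span_singleton_le_iff_mem _).mpr ((hiff I).mp hP he₁I))
  have hsub2 : SVar S J ⊆ SVar S (Ideal.span {e₂}) := by
    intro P hP
    obtain ⟨Q, _, _, hiff⟩ := rep hSmul P
    exact (hiff _).mpr ((Ideal.span_singleton_le_iff_mem _).mpr ((hiff J).mp hP he₂J))
  refine ⟨e₁, e₂, hzero, hsumS, ?_, ?_⟩
  · refine Subset.antisymm hsub1 fun P hP => ?_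
    have hPt : P ∈ SVar S I ∪ SVar S J := huniv ▸ mem_univ _
    rcases hPt with h | h
    · exact h
    · exact absurd (hInt P hP (hsub2 h)) not_false
  · refine Subset.antisymm hsub2 fun P hP => ?_
    have hPt : P ∈ SVar S I ∪ SVar S J := huniv ▸ mem_univ _
    rcases hPt with h | h
    · exact absurd (hInt P (hsub1 h) hP) not_false
    · exact h


/-- Closed sets of the `S`-Zariski topology are exactly the `S`-varieties. -/
theorem isClosed_zariski_iff (hS1 : (1 : R) ∈ S) (hSmul : ∀ s ∈ S, ∀ t ∈ S, s * t ∈ S)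
    {C : Set (SSpec S)} :
    @IsClosed _ (sZariskiTop S) C ↔ ∃ I : Ideal R, C = SVar S I := by
  constructor
  · intro h
    have hopen : TopologicalSpace.GenerateOpen {U | ∃ I : Ideal R, U = (SVar S I)ᶜ} Cᶜ :=
      h.isOpen_compl
    have key : ∀ U : Set (SSpec S),
        TopologicalSpace.GenerateOpen {U | ∃ I : Ideal R, U = (SVar S I)ᶜ} U →
        ∃ I : Ideal R, U = (SVar S I)ᶜ := by
      intro U hU
      induction hU with
      | basic V hV => exact hV
      | univ =>
        exact ⟨⊤, by rw [SVar_empty_of_mem hSmul hS1 Submodule.mem_top, compl_empty]⟩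
      | inter U V _ _ ihU ihV =>
        obtain ⟨I, rfl⟩ := ihU
        obtain ⟨J, rfl⟩ := ihV
        exact ⟨I * J, by rw [SVar_mul hSmul, compl_union]⟩
      | sUnion 𝒮 _ ih =>
        refine ⟨sSup {I : Ideal R | (SVar S I)ᶜ ∈ 𝒮}, ?_⟩
        rw [SVar_sSup hSmul]
        ext x
        simp only [mem_sUnion, mem_compl_iff, mem_iInter, not_forall, mem_setOf_eq]
        constructor
        · rintro ⟨U, hU𝒮, hxU⟩
          obtain ⟨I, rfl⟩ := ih U hU𝒮
          exact ⟨I, hU𝒮, hxU⟩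
        · rintro ⟨I, hI, hx⟩
          exact ⟨(SVar S I)ᶜ, hI, hx⟩
    obtain ⟨I, hI⟩ := key _ hopen
    exact ⟨I, by rw [← compl_compl C, hI, compl_compl]⟩
  · rintro ⟨I, rfl⟩
    letI := sZariskiTop S
    exact ⟨TopologicalSpace.isOpen_generateFrom_of_mem ⟨I, rfl⟩⟩


/-- The `S`-flat topology is compact. -/
theorem flat_compactSpace (hS1 : (1 : R) ∈ S) (hSmul : ∀ s ∈ S, ∀ t ∈ S, s * t ∈ S) :
    @CompactSpace (SSpec S) (sFlatTop S) := by
  letI := sFlatTop S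
  rw [← isCompact_univ_iff, isCompact_iff_ultrafilter_le_nhds]
  intro F _
  have hmono : ∀ {f g : R}, (∀ Q : Ideal R, Q.IsPrime → (∀ x ∈ S, x ∉ Q) → f ∈ Q → g ∈ Q) →
      SVar S (Ideal.span {f}) ⊆ SVar S (Ideal.span {g}) := by
    intro f g h P hP
    obtain ⟨Q, hQ, hd, hiff⟩ := rep hSmul P
    exact (hiff _).mpr ((Ideal.span_singleton_le_iff_mem _).mpr
      (h Q hQ hd ((hiff _).mp hP (Ideal.mem_span_singleton_self f))))
  let I : Ideal R :=
    { carrier := {f | SVar S (Ideal.span {f}) ∈ F}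
      zero_mem' := by
        have h : SVar S (Ideal.span {(0 : R)}) = univ := by
          rw [eq_univ_iff_forall]
          intro P
          refine ⟨1, hS1, fun x hx => ?_⟩
          have hx0 : x = 0 := by simpa using Ideal.mem_span_singleton.mp hx
          rw [hx0, mul_zero]
          exact P.1.zero_mem
        show SVar S (Ideal.span {(0:R)}) ∈ F
        rw [h]
        exact Filter.univ_mem
      add_mem' := by
        intro a b ha hb
        refine Filter.mem_of_superset (Filter.inter_mem ha hb) ?_
        intro P hP
        obtain ⟨Q, hQ, hd, hiff⟩ := rep hSmul P
        refine (hiff _).mpr ((Ideal.span_singleton_le_iff_mem _).mpr (Q.add_mem ?_ ?_))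
        · exact (hiff _).mp hP.1 (Ideal.mem_span_singleton_self a)
        · exact (hiff _).mp hP.2 (Ideal.mem_span_singleton_self b)
      smul_mem' := by
        intro c x hx
        refine Filter.mem_of_superset hx (hmono fun Q _ _ h => ?_)
        rw [smul_eq_mul]
        exact Q.mul_mem_left c h }
  have hSempty : ∀ u ∈ S, SVar S (Ideal.span {u}) = ∅ := fun u hu =>
    SVar_empty_of_mem hSmul hu (Ideal.mem_span_singleton_self u)
  have hdis : ∀ x ∈ S, x ∉ I := by
    intro x hx hxI
    have : SVar S (Ideal.span {x}) ∈ F := hxI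
    rw [hSempty x hx] at this
    exact Filter.empty_notMem (F : Filter (SSpec S)) this
  have hprime : I.IsPrime := by
    refine Ideal.isPrime_iff.mpr ⟨?_, ?_⟩
    · intro h
      exact hdis 1 hS1 (h ▸ Submodule.mem_top)
    · intro a b hab
      have h : SVar S (Ideal.span {a * b}) ∈ F := hab
      rw [← Ideal.span_singleton_mul_span_singleton, SVar_mul hSmul] at h
      exact Ultrafilter.union_mem_iff.mp h
  refine ⟨⟨I, isSPrime_of_prime hS1 hprime hdis⟩, mem_univ _, ?_⟩
  have hnhds : @nhds _ (sFlatTop S) ⟨I, isSPrime_of_prime hS1 hprime hdis⟩ =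
      ⨅ s ∈ {s | (⟨I, isSPrime_of_prime hS1 hprime hdis⟩ : SSpec S) ∈ s ∧
        s ∈ {U | ∃ f : R, U = SVar S (Ideal.span {f})}}, Filter.principal s :=
    TopologicalSpace.nhds_generateFrom
  rw [hnhds]
  refine le_iInf₂ fun s hs => ?_
  obtain ⟨hPs, f, rfl⟩ := hs
  rw [Filter.le_principal_iff]
  have : Ideal.span {f} ≤ I := (mem_SVar_of_prime hS1 hprime hdis rfl).mp hPs
  exact this (Ideal.mem_span_singleton_self f)

/-- A compact open in the `S`-flat topology is an `S`-variety. -/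
theorem flat_open_compact_eq (hS1 : (1 : R) ∈ S) (hSmul : ∀ s ∈ S, ∀ t ∈ S, s * t ∈ S)
    {C : Set (SSpec S)} (hC : @IsOpen _ (sFlatTop S) C) (hcomp : @IsCompact _ (sFlatTop S) C) :
    ∃ K : Ideal R, C = SVar S K := by
  letI := sFlatTop S
  have hB : IsTopologicalBasis ((fun f : Set (Set (SSpec S)) => ⋂₀ f) ''
      {f : Set (Set (SSpec S)) | f.Finite ∧ f ⊆ {U | ∃ g : R, U = SVar S (Ideal.span {g})}}) :=
    isTopologicalBasis_of_subbasis rfl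
  obtain ⟨𝒮, h𝒮B, hCU⟩ := hB.open_eq_sUnion hC
  have hSv : ∀ U ∈ 𝒮, ∃ K : Ideal R, U = SVar S K := by
    intro U hU
    obtain ⟨f, ⟨_, hf_sub⟩, rfl⟩ := h𝒮B hU
    refine ⟨sSup {I : Ideal R | SVar S I ∈ f}, ?_⟩
    rw [SVar_sSup hSmul]
    ext x
    simp only [mem_sInter, mem_iInter, mem_setOf_eq]
    constructor
    · intro h I hI
      exact h _ hI
    · intro h V hV
      obtain ⟨g, rfl⟩ := hf_sub hV
      exact h _ hV
  have hopen : ∀ U : 𝒮, IsOpen (U : Set (SSpec S)) := fun U => hB.isOpen (h𝒮B U.2)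
  have hcover : C ⊆ ⋃ U : 𝒮, (U : Set (SSpec S)) := by
    rw [← sUnion_eq_iUnion]
    exact hCU.le
  obtain ⟨t, ht⟩ := hcomp.elim_finite_subcover (fun U : 𝒮 => (U : Set (SSpec S))) hopen hcover
  choose K hK using fun U : 𝒮 => hSv U U.2
  refine ⟨∏ U ∈ t, K U, ?_⟩
  have hprod : SVar S (∏ U ∈ t, K U) = ⋃ U ∈ t, SVar S (K U) := by
    ext P
    obtain ⟨Q, hQ, _, hiff⟩ := rep hSmul P
    simp only [mem_iUnion, hiff, hQ.prod_le, exists_prop]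
  rw [hprod]
  apply Subset.antisymm
  · intro x hx
    obtain ⟨U, hUt, hxU⟩ := mem_iUnion₂.mp (ht hx)
    exact mem_iUnion₂.mpr ⟨U, hUt, by rwa [← hK U]⟩
  · intro x hx
    obtain ⟨U, _, hxU⟩ := mem_iUnion₂.mp hx
    rw [hCU]
    rw [← hK U] at hxU
    exact ⟨U.1, U.2, hxU⟩


theorem good_of_vars (hS0 : (0 : R) ∉ S) (hS1 : (1 : R) ∈ S)
    (hSmul : ∀ s ∈ S, ∀ t ∈ S, s * t ∈ S) {C : Set (SSpec S)} {I J : Ideal R}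
    (hCI : C = SVar S I) (hCJ : Cᶜ = SVar S J) :
    ∃ e₁ e₂ : R, e₁ * e₂ = 0 ∧ e₁ + e₂ ∈ S ∧
      C = SVar S (Ideal.span {e₁}) ∧ Cᶜ = SVar S (Ideal.span {e₂}) := by
  obtain ⟨e₁, e₂, h0, hs, h1, h2⟩ := exists_pair hS0 hS1 hSmul (I := I) (J := J)
    (by rw [← hCI, ← hCJ, inter_compl_self]) (by rw [← hCI, ← hCJ, union_compl_self])
  exact ⟨e₁, e₂, h0, hs, by rw [hCI, h1], by rw [hCJ, h2]⟩

theorem flat_clopen_iff (hS0 : (0 : R) ∉ S) (hS1 : (1 : R) ∈ S)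
    (hSmul : ∀ s ∈ S, ∀ t ∈ S, s * t ∈ S) {C : Set (SSpec S)} :
    @IsClopen _ (sFlatTop S) C ↔
      ∃ e₁ e₂ : R, e₁ * e₂ = 0 ∧ e₁ + e₂ ∈ S ∧
        C = SVar S (Ideal.span {e₁}) ∧ Cᶜ = SVar S (Ideal.span {e₂}) := by
  letI := sFlatTop S
  constructor
  · intro h
    haveI : CompactSpace (SSpec S) := flat_compactSpace hS1 hSmul
    obtain ⟨K, hK⟩ := flat_open_compact_eq hS1 hSmul h.2 h.1.isCompact
    obtain ⟨K', hK'⟩ := flat_open_compact_eq hS1 hSmul h.1.isOpen_compl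
      h.2.isClosed_compl.isCompact
    exact good_of_vars hS0 hS1 hSmul hK hK'
  · rintro ⟨e₁, e₂, h0, hs, h1, h2⟩
    constructor
    · rw [← isOpen_compl_iff, h2]
      exact TopologicalSpace.isOpen_generateFrom_of_mem ⟨e₂, rfl⟩
    · rw [h1]
      exact TopologicalSpace.isOpen_generateFrom_of_mem ⟨e₁, rfl⟩

theorem zariski_clopen_iff (hS0 : (0 : R) ∉ S) (hS1 : (1 : R) ∈ S)
    (hSmul : ∀ s ∈ S, ∀ t ∈ S, s * t ∈ S) {C : Set (SSpec S)} :
    @IsClopen _ (sZariskiTop S) C ↔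
      ∃ e₁ e₂ : R, e₁ * e₂ = 0 ∧ e₁ + e₂ ∈ S ∧
        C = SVar S (Ideal.span {e₁}) ∧ Cᶜ = SVar S (Ideal.span {e₂}) := by
  letI := sZariskiTop S
  constructor
  · intro h
    obtain ⟨I, hI⟩ := (isClosed_zariski_iff hS1 hSmul).mp h.1
    obtain ⟨J, hJ⟩ := (isClosed_zariski_iff hS1 hSmul).mp h.2.isClosed_compl
    exact good_of_vars hS0 hS1 hSmul hI hJ
  · rintro ⟨e₁, e₂, h0, hs, h1, h2⟩
    constructor
    · exact (isClosed_zariski_iff hS1 hSmul).mpr ⟨_, h1⟩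
    · rw [← isClosed_compl_iff]
      exact (isClosed_zariski_iff hS1 hSmul).mpr ⟨_, h2⟩

theorem connected_iff_clopen {X : Type*} [TopologicalSpace X] :
    ConnectedSpace X ↔ Nonempty X ∧ ∀ C : Set X, IsClopen C → C = ∅ ∨ C = univ := by
  constructor
  · intro h
    exact ⟨h.toNonempty, fun C hC => isClopen_iff.mp hC⟩
  · rintro ⟨hne, h⟩
    refine { toNonempty := hne, isPreconnected_univ := ?_ }
    intro u v hu hv hcov hune hvne
    simp only [univ_inter] at hune hvne ⊢
    by_contra hc
    rw [not_nonempty_iff_eq_empty] at hc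
    have hclopen : IsClopen u := by
      refine ⟨⟨?_⟩, hu⟩
      have hcv : uᶜ = v := by
        apply Subset.antisymm
        · intro x hx
          rcases hcov (mem_univ x) with h' | h'
          · exact absurd h' hx
          · exact h'
        · intro x hx hxu
          have hm : x ∈ u ∩ v := ⟨hxu, hx⟩
          rw [hc] at hm
          exact Set.notMem_empty x hm
      rw [hcv]; exact hv
    rcases h u hclopen with h' | h'
    · obtain ⟨x, hxu⟩ := hune
      rw [h'] at hxu
      exact Set.notMem_empty x hxu
    · obtain ⟨x, hxv⟩ := hvne
      have hxu : x ∈ u := h' ▸ mem_univ x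
      have hm : x ∈ u ∩ v := ⟨hxu, hxv⟩
      rw [hc] at hm
      exact Set.notMem_empty x hm

end SConnAux

/-- `Spec_S R` is connected with respect to the `S`-flat topology if and only if it is
connected with respect to the `S`-Zariski topology. -/
theorem sFlat_connected_iff_sZariski_connected {R : Type*} [CommRing R] [Nontrivial R]
    (S : Set R)
    (hS0 : (0 : R) ∉ S) (hS1 : (1 : R) ∈ S) (hSmul : ∀ s ∈ S, ∀ t ∈ S, s * t ∈ S) :
    @ConnectedSpace (SSpec S) (sFlatTop S) ↔ @ConnectedSpace (SSpec S) (sZariskiTop S) := by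
  have key : ∀ C : Set (SSpec S), @IsClopen _ (sFlatTop S) C ↔ @IsClopen _ (sZariskiTop S) C := by
    intro C
    rw [SConnAux.flat_clopen_iff hS0 hS1 hSmul, SConnAux.zariski_clopen_iff hS0 hS1 hSmul]
  rw [@SConnAux.connected_iff_clopen _ (sFlatTop S),
    @SConnAux.connected_iff_clopen _ (sZariskiTop S)]
  constructor
  · rintro ⟨hne, h⟩
    exact ⟨hne, fun C hC => h C ((key C).mpr hC)⟩
  · rintro ⟨hne, h⟩
    exact ⟨hne, fun C hC => h C ((key C).mp hC)⟩
end

section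
/- The following statements are equivalent: (1) Spec_S R is a noetherian topological space with respect to the S-flat topology; (2) the open subsets of Spec_S R with respect to the S-flat topology are exactly the sets V_S(I) where I ranges over the finitely generated ideals of R; (3) for every prime ideal P of R disjoint from S, Λ(P) = D_S(f) for some f ∈ R; (4) any arbitrary intersection of open subsets of the S-Zariski topology is open in the S-Zariski topology. -/
namespace PrimeSpectrum

open TopologicalSpace Topology Set

variable {R : Type*} [CommRing R]

/-- The inverse (Hochster dual) of the Zariski topology. -/
def inverseTopology (R : Type*) [CommRing R] : TopologicalSpace (PrimeSpectrum R) :=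
  generateFrom (range fun f : R => zeroLocus {f})

lemma isClopen_preimage_basicOpen (f : R) :
    IsClopen (WithTopology.ofTopology ⁻¹' (basicOpen f : Set (PrimeSpectrum R)) :
      Set (WithConstructibleTopology (PrimeSpectrum R))) := by
  refine ⟨isOpen_compl_iff.1 (WithConstructibleTopology.isOpen_iff.2 ?_),
    WithConstructibleTopology.isOpen_iff.2
      ((isCompact_basicOpen f).isOpen_constructibleTopology_of_isOpen (basicOpen f).2)⟩
  have hc : IsCompact ((zeroLocus {f})ᶜ : Set (PrimeSpectrum R)) := by
    rw [← basicOpen_eq_zeroLocus_compl]; exact isCompact_basicOpen f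
  rw [← preimage_compl, basicOpen_eq_zeroLocus_compl, compl_compl]
  exact hc.isOpen_constructibleTopology_of_isClosed (isClosed_zeroLocus _)

lemma continuous_ofTopology_inverseTopology :
    Continuous[_, inverseTopology R]
      (WithTopology.ofTopology : WithConstructibleTopology (PrimeSpectrum R) → _) := by
  refine continuous_generateFrom_iff.2 (forall_mem_range.2 fun f => ?_)
  simpa [basicOpen_eq_zeroLocus_compl] using
    (isClopen_preimage_basicOpen f).isClosed.isOpen_compl

lemma isCompact_inverseTopology_zeroLocus_inter (M : Submonoid R) (I : Ideal R) :
    @IsCompact _ (inverseTopology R) (zeroLocus I ∩ {P | Disjoint (M : Set R) P.asIdeal}) := by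
  let ι : WithConstructibleTopology (PrimeSpectrum R) → PrimeSpectrum R :=
    WithTopology.ofTopology
  have hK : IsClosed (ι ⁻¹' (zeroLocus I ∩ {P | Disjoint (M : Set R) P.asIdeal})) := by
    have h : ι ⁻¹' (zeroLocus I ∩ {P | Disjoint (M : Set R) P.asIdeal}) =
        (⋂ f ∈ I, (ι ⁻¹' basicOpen f)ᶜ) ∩ ⋂ s ∈ M, ι ⁻¹' basicOpen s := by
      ext P; simp [ι, mem_zeroLocus, subset_def, disjoint_left]
    rw [h]
    exact (isClosed_biInter fun f _ => (isClopen_preimage_basicOpen f).isOpen.isClosed_compl).inter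
      (isClosed_biInter fun s _ => (isClopen_preimage_basicOpen s).isClosed)
  have := @IsCompact.image _ _ _ (inverseTopology R) _ _ hK.isCompact
    continuous_ofTopology_inverseTopology
  rwa [image_preimage_eq _ (WithTopology.ofTopology_surjective _)] at this

end PrimeSpectrum

namespace SSpec

open PrimeSpectrum TopologicalSpace Topology Set

variable {R : Type*} [CommRing R] {M : Submonoid R}

lemma notMem_of_mem (q : SSpec (M : Set R)) {s : R} (hs : s ∈ M) : s ∉ q.1 :=
  fun h => (eq_empty_iff_forall_notMem.1 q.2.1) s ⟨h, hs⟩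

def saturation (q : SSpec (M : Set R)) : Ideal R where
  carrier := {a | ∃ s ∈ M, s * a ∈ q.1}
  zero_mem' := ⟨1, M.one_mem, by simp⟩
  add_mem' := by
    rintro a b ⟨s, hs, ha⟩ ⟨t, ht, hb⟩
    refine ⟨s * t, M.mul_mem hs ht, ?_⟩
    rw [show s * t * (a + b) = t * (s * a) + s * (t * b) by ring]
    exact q.1.add_mem (q.1.mul_mem_left _ ha) (q.1.mul_mem_left _ hb)
  smul_mem' := by
    rintro c a ⟨s, hs, ha⟩
    exact ⟨s, hs, by simpa [mul_left_comm] using q.1.mul_mem_left c ha⟩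

lemma saturation_isPrime (q : SSpec (M : Set R)) : q.saturation.IsPrime := by
  obtain ⟨w, hw, hwq⟩ := q.2.2
  refine ⟨fun h => ?_, fun {x y} ⟨s, hs, hxy⟩ => ?_⟩
  · obtain ⟨s, hs, h1⟩ := (Ideal.eq_top_iff_one _).1 h
    exact q.notMem_of_mem hs (by simpa using h1)
  · rcases hwq (s * x) y (by rwa [mul_assoc]) with h | h
    · exact .inl ⟨w * s, M.mul_mem hw hs, by rwa [mul_assoc]⟩
    · exact .inr ⟨w, hw, h⟩

def toPrimeSpectrum (q : SSpec (M : Set R)) : PrimeSpectrum R :=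
  ⟨q.saturation, q.saturation_isPrime⟩

lemma disjoint_toPrimeSpectrum (q : SSpec (M : Set R)) :
    Disjoint (M : Set R) q.toPrimeSpectrum.asIdeal :=
  disjoint_left.2 fun _ hs ⟨_, ht, hts⟩ => q.notMem_of_mem (M.mul_mem ht hs) hts

def ofPrimeSpectrum (P : PrimeSpectrum R) (hP : Disjoint (M : Set R) P.asIdeal) :
    SSpec (M : Set R) :=
  ⟨P.asIdeal, disjoint_iff_inter_eq_empty.1 hP.symm, 1, M.one_mem,
    fun _ _ hab => by simpa using P.2.mem_or_mem hab⟩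

lemma toPrimeSpectrum_ofPrimeSpectrum (P : PrimeSpectrum R)
    (hP : Disjoint (M : Set R) P.asIdeal) : (ofPrimeSpectrum P hP).toPrimeSpectrum = P := by
  ext a
  refine ⟨fun ⟨s, hs, h⟩ => (P.2.mem_or_mem h).resolve_left (disjoint_left.1 hP hs),
    fun h => ⟨1, M.one_mem, by rw [one_mul]; exact h⟩⟩

lemma range_toPrimeSpectrum :
    range (toPrimeSpectrum (M := M)) = {P | Disjoint (M : Set R) P.asIdeal} :=
  Subset.antisymm (range_subset_iff.2 disjoint_toPrimeSpectrum)
    fun P hP => ⟨ofPrimeSpectrum P hP, toPrimeSpectrum_ofPrimeSpectrum P hP⟩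

lemma mem_SVar_iff {q : SSpec (M : Set R)} {I : Ideal R} :
    q ∈ SVar (M : Set R) I ↔ I ≤ q.toPrimeSpectrum.asIdeal := by
  refine ⟨fun ⟨s, hs, h⟩ x hx => ⟨s, hs, h x hx⟩, fun h => ?_⟩
  obtain ⟨w, hw, hwq⟩ := q.2.2
  refine ⟨w, hw, fun x hx => ?_⟩
  obtain ⟨t, ht, htx⟩ := h hx
  exact (hwq t x htx).resolve_left (q.notMem_of_mem (M.mul_mem hw ht))

lemma SVar_eq_preimage_zeroLocus (I : Ideal R) :
    SVar (M : Set R) I = toPrimeSpectrum ⁻¹' zeroLocus I :=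
  ext fun _ => mem_SVar_iff

lemma mem_SVar_span_singleton {q : SSpec (M : Set R)} {a : R} :
    q ∈ SVar (M : Set R) (Ideal.span {a}) ↔ a ∈ q.toPrimeSpectrum.asIdeal := by
  rw [mem_SVar_iff, Ideal.span_singleton_le_iff_mem]

lemma SVar_antitone {I J : Ideal R} (h : I ≤ J) : SVar (M : Set R) J ⊆ SVar (M : Set R) I :=
  fun _ hq => mem_SVar_iff.2 (h.trans (mem_SVar_iff.1 hq))

lemma SVar_span (E : Set R) :
    SVar (M : Set R) (Ideal.span E) = ⋂ a ∈ E, SVar (M : Set R) (Ideal.span {a}) := by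
  ext q
  simp [mem_SVar_iff, Ideal.span_le, subset_def]

lemma SVar_sup (I J : Ideal R) :
    SVar (M : Set R) (I ⊔ J) = SVar (M : Set R) I ∩ SVar (M : Set R) J := by
  simp only [SVar_eq_preimage_zeroLocus, zeroLocus_sup, preimage_inter]

lemma SVar_bot : SVar (M : Set R) ⊥ = univ := by
  simp only [SVar_eq_preimage_zeroLocus, Submodule.bot_coe, zeroLocus_singleton_zero, preimage_univ]

lemma SVar_prod {ι : Type*} (s : Finset ι) (J : ι → Ideal R) :
    SVar (M : Set R) (∏ i ∈ s, J i) = ⋃ i ∈ s, SVar (M : Set R) (J i) := by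
  ext q
  simp only [mem_SVar_iff, q.toPrimeSpectrum.2.prod_le, mem_iUnion, exists_prop]

section FlatTopology

attribute [local instance] sFlatTop

lemma isOpen_SVar_of_fg {J : Ideal R} (hJ : J.FG) : IsOpen (SVar (M : Set R) J) := by
  obtain ⟨T, rfl⟩ := hJ
  rw [SVar_span]
  exact isOpen_biInter_finset fun f _ => isOpen_generateFrom_of_mem ⟨f, rfl⟩

lemma isTopologicalBasis_SVar_fg :
    IsTopologicalBasis (range fun J : {J : Ideal R // J.FG} => SVar (M : Set R) J) := by
  refine isTopologicalBasis_of_subbasis_of_finiteInter (le_antisymm ?_ ?_)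
    ⟨⟨⟨⊥, Submodule.fg_bot⟩, SVar_bot⟩, ?_⟩
  · exact le_generateFrom (forall_mem_range.2 fun J => isOpen_SVar_of_fg J.2)
  · exact le_generateFrom fun _ ⟨f, hf⟩ =>
      hf ▸ isOpen_generateFrom_of_mem ⟨⟨_, Submodule.fg_span_singleton f⟩, rfl⟩
  · rintro _ ⟨J₁, rfl⟩ _ ⟨J₂, rfl⟩
    exact ⟨⟨_, Submodule.FG.sup J₁.2 J₂.2⟩, SVar_sup _ _⟩

lemma mem_closure_singleton_iff {p q : SSpec (M : Set R)} :
    q ∈ closure {p} ↔ q.toPrimeSpectrum ≤ p.toPrimeSpectrum := by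
  simp only [isTopologicalBasis_SVar_fg.mem_closure_iff, forall_mem_range, inter_singleton_nonempty,
    mem_SVar_iff, Subtype.forall]
  refine ⟨fun h a ha => ?_, fun h J _ hJ => hJ.trans h⟩
  rw [← Ideal.span_singleton_le_iff_mem] at ha ⊢
  exact h _ (Submodule.fg_span_singleton a) ha

lemma closure_singleton_subset_compl_SVar {p : SSpec (M : Set R)} {I : Ideal R}
    (hp : p ∉ SVar (M : Set R) I) : closure {p} ⊆ (SVar (M : Set R) I)ᶜ :=
  fun _ hq hqI => hp (mem_SVar_iff.2 ((mem_SVar_iff.1 hqI).trans (mem_closure_singleton_iff.1 hq)))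

lemma exists_closure_singleton_eq_of_eq_compl_SVar {p : SSpec (M : Set R)} {I : Ideal R}
    (h : closure {p} = (SVar (M : Set R) I)ᶜ) :
    ∃ f, closure {p} = (SVar (M : Set R) (Ideal.span {f}))ᶜ := by
  have hp : p ∉ SVar (M : Set R) I := by rw [← mem_compl_iff, ← h]; exact subset_closure rfl
  obtain ⟨f, hfI, hfp⟩ := SetLike.not_le_iff_exists.1 (mt mem_SVar_iff.2 hp)
  have hpf : p ∉ SVar (M : Set R) (Ideal.span {f}) := mt mem_SVar_span_singleton.1 hfp
  refine ⟨f, (closure_singleton_subset_compl_SVar hpf).antisymm ?_⟩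
  rw [h]
  exact compl_subset_compl.2 (SVar_antitone ((Ideal.span_singleton_le_iff_mem _).2 hfI))

lemma sFlatTop_eq_induced :
    sFlatTop (M : Set R) = (inverseTopology R).induced toPrimeSpectrum := by
  rw [sFlatTop, inverseTopology, induced_generateFrom_eq, ← range_comp]
  congr 1
  ext U
  simp [SVar_eq_preimage_zeroLocus, zeroLocus_span, eq_comm]

lemma isCompact_SVar (I : Ideal R) : IsCompact (SVar (M : Set R) I) := by
  rw [@IsInducing.isCompact_iff _ _ _ (inverseTopology R) _ _
      (IsInducing.mk (tY := inverseTopology R) sFlatTop_eq_induced),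
    SVar_eq_preimage_zeroLocus, image_preimage_eq_inter_range, range_toPrimeSpectrum]
  exact isCompact_inverseTopology_zeroLocus_inter M I

lemma exists_fg_eq_SVar_of_isCompact_of_isOpen {U : Set (SSpec (M : Set R))}
    (hc : IsCompact U) (ho : IsOpen U) : ∃ J : Ideal R, J.FG ∧ U = SVar (M : Set R) J := by
  obtain ⟨s, hs, rfl⟩ := (isCompact_open_iff_eq_finite_iUnion_of_isTopologicalBasis _
    isTopologicalBasis_SVar_fg (fun J => isCompact_SVar J.1) U).1 ⟨hc, ho⟩
  refine ⟨∏ J ∈ hs.toFinset, J.1, ?_, by simp [SVar_prod]⟩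
  exact Finset.prod_induction _ Ideal.FG (fun _ _ => Submodule.FG.mul)
    ⟨{1}, by simp [Ideal.one_eq_top]⟩ fun J _ => J.2

lemma isOpen_iff_exists_fg [NoetherianSpace (SSpec (M : Set R))] {U : Set (SSpec (M : Set R))} :
    IsOpen U ↔ ∃ J : Ideal R, J.FG ∧ U = SVar (M : Set R) J := by
  refine ⟨exists_fg_eq_SVar_of_isCompact_of_isOpen (NoetherianSpace.isCompact U), ?_⟩
  rintro ⟨J, hJ, rfl⟩
  exact isOpen_SVar_of_fg hJ

lemma exists_closure_singleton_eq_of_isOpen_iff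
    (h : ∀ U : Set (SSpec (M : Set R)),
      IsOpen U ↔ ∃ J : Ideal R, J.FG ∧ U = SVar (M : Set R) J)
    (p : SSpec (M : Set R)) : ∃ f, closure {p} = (SVar (M : Set R) (Ideal.span {f}))ᶜ := by
  obtain ⟨J, -, hJ⟩ := (h _).1 isClosed_closure.isOpen_compl
  exact exists_closure_singleton_eq_of_eq_compl_SVar (compl_eq_comm.1 hJ).symm

lemma exists_closure_singleton_eq_of_isPrime
    (h : ∀ p : SSpec (M : Set R), p.1.IsPrime →
      ∃ f, closure {p} = (SVar (M : Set R) (Ideal.span {f}))ᶜ)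
    (q : SSpec (M : Set R)) : ∃ f, closure {q} = (SVar (M : Set R) (Ideal.span {f}))ᶜ := by
  let p := ofPrimeSpectrum q.toPrimeSpectrum q.disjoint_toPrimeSpectrum
  have hpq : p.toPrimeSpectrum = q.toPrimeSpectrum := toPrimeSpectrum_ofPrimeSpectrum _ _
  have hcl : closure {p} = closure {q} := by
    ext r; rw [mem_closure_singleton_iff, mem_closure_singleton_iff, hpq]
  simpa only [hcl] using h p q.toPrimeSpectrum.2

lemma noetherianSpace_of_forall_closure_singleton_eq
    (h : ∀ q : SSpec (M : Set R), ∃ f, closure {q} = (SVar (M : Set R) (Ideal.span {f}))ᶜ) :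
    NoetherianSpace (SSpec (M : Set R)) := by
  choose F hF using h
  refine (noetherianSpace_iff_opens _).2 fun V => ?_
  -- an open set is the intersection of the complements of the closures of the points outside it
  have hV : (V : Set (SSpec (M : Set R))) = SVar (M : Set R) (Ideal.span (F '' (↑V)ᶜ)) := by
    have hF' (q) : SVar (M : Set R) (Ideal.span {F q}) = (closure {q})ᶜ := by rw [hF, compl_compl]
    rw [SVar_span, biInter_image]
    ext r
    simp only [hF', mem_iInter, mem_compl_iff]
    refine ⟨fun hr q hq hrq => hq ((specializes_iff_mem_closure.2 hrq).mem_open V.2 hr),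
      fun h => by_contra fun hr => h r hr (subset_closure rfl)⟩
  rw [hV]
  exact isCompact_SVar _

end FlatTopology

section ZariskiTopology

attribute [local instance] sZariskiTop

lemma isOpen_iff_exists_eq_compl_SVar {U : Set (SSpec (M : Set R))} :
    IsOpen U ↔ ∃ I : Ideal R, U = (SVar (M : Set R) I)ᶜ := by
  have key (U : Set (SSpec (M : Set R))) : IsOpen[zariskiTopology.induced toPrimeSpectrum] U ↔
      ∃ I : Ideal R, U = (SVar (M : Set R) I)ᶜ := by
    simp_rw [isOpen_induced_iff, SVar_eq_preimage_zeroLocus, ← preimage_compl]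
    constructor
    · rintro ⟨V, hV, rfl⟩
      obtain ⟨I, hI⟩ := (isClosed_iff_zeroLocus_ideal _).1 hV.isClosed_compl
      exact ⟨I, by rw [← hI, compl_compl]⟩
    · rintro ⟨I, rfl⟩
      exact ⟨_, (isClosed_zeroLocus I).isOpen_compl, rfl⟩
  have h : sZariskiTop (M : Set R) = zariskiTopology.induced toPrimeSpectrum := by
    rw [← generateFrom_setOfPred_isOpen (zariskiTopology.induced toPrimeSpectrum)]
    exact congrArg generateFrom (ext fun U => (key U).symm)
  rw [h, key]

lemma closure_singleton_subset_of_isOpen {p : SSpec (M : Set R)} {U : Set (SSpec (M : Set R))}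
    (hU : IsOpen U) (hp : p ∈ U) : closure[sFlatTop _] {p} ⊆ U := by
  obtain ⟨I, rfl⟩ := isOpen_iff_exists_eq_compl_SVar.1 hU
  exact closure_singleton_subset_compl_SVar hp

lemma isOpen_sInter_of_forall_closure_singleton_eq
    (h : ∀ q : SSpec (M : Set R),
      ∃ f, closure[sFlatTop _] {q} = (SVar (M : Set R) (Ideal.span {f}))ᶜ)
    {𝒰 : Set (Set (SSpec (M : Set R)))} (h𝒰 : ∀ U ∈ 𝒰, IsOpen U) :
    IsOpen (⋂₀ 𝒰) := by
  choose F hF using h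
  have hunion : ⋂₀ 𝒰 = ⋃ p ∈ ⋂₀ 𝒰, closure[sFlatTop _] {p} :=
    Subset.antisymm (fun p hp => mem_biUnion hp (mem_closure_singleton_iff.2 le_rfl))
      (iUnion₂_subset fun p hp =>
        subset_sInter fun U hU => closure_singleton_subset_of_isOpen (h𝒰 U hU) (hp U hU))
  rw [hunion]
  exact isOpen_biUnion fun p _ => hF p ▸ isOpen_iff_exists_eq_compl_SVar.2 ⟨_, rfl⟩

lemma exists_closure_singleton_eq_of_isOpen_sInter
    (h : ∀ 𝒰 : Set (Set (SSpec (M : Set R))), (∀ U ∈ 𝒰, IsOpen U) →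
      IsOpen (⋂₀ 𝒰))
    (p : SSpec (M : Set R)) :
    ∃ f, closure[sFlatTop _] {p} = (SVar (M : Set R) (Ideal.span {f}))ᶜ := by
  have hcl : closure[sFlatTop _] {p} =
      ⋂₀ ((fun a => (SVar (M : Set R) (Ideal.span {a}))ᶜ) ''
        (p.toPrimeSpectrum.asIdeal : Set R)ᶜ) := by
    ext q
    simp only [mem_closure_singleton_iff, sInter_image, mem_iInter, mem_compl_iff,
      mem_SVar_span_singleton, SetLike.mem_coe]
    exact ⟨fun hqp a hap haq => hap (hqp haq), fun h a => not_imp_not.1 (h a)⟩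
  have hopen : IsOpen (closure[sFlatTop _] {p}) := by
    rw [hcl]
    exact h _ (forall_mem_image.2 fun a _ => isOpen_iff_exists_eq_compl_SVar.2 ⟨_, rfl⟩)
  obtain ⟨I, hI⟩ := isOpen_iff_exists_eq_compl_SVar.1 hopen
  exact exists_closure_singleton_eq_of_eq_compl_SVar hI

end ZariskiTopology

end SSpec

theorem sFlat_noetherian_tfae_general {R : Type*} [CommRing R] (S : Set R)
    (hS1 : (1 : R) ∈ S) (hSmul : ∀ s ∈ S, ∀ t ∈ S, s * t ∈ S) :
    List.TFAE
      [@TopologicalSpace.NoetherianSpace (SSpec S) (sFlatTop S),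
       ∀ U : Set (SSpec S),
         @IsOpen (SSpec S) (sFlatTop S) U ↔ ∃ I : Ideal R, I.FG ∧ U = SVar S I,
       ∀ p : SSpec S, p.1.IsPrime →
         ∃ f : R, @closure (SSpec S) (sFlatTop S) {p} = (SVar S (Ideal.span {f}))ᶜ,
       ∀ 𝒰 : Set (Set (SSpec S)), (∀ U ∈ 𝒰, @IsOpen (SSpec S) (sZariskiTop S) U) →
         @IsOpen (SSpec S) (sZariskiTop S) (⋂₀ 𝒰)] := by
  obtain ⟨M, rfl⟩ : ∃ M : Submonoid R, (M : Set R) = S :=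
    ⟨⟨⟨S, fun ha hb => hSmul _ ha _ hb⟩, hS1⟩, rfl⟩
  tfae_have 1 → 2 := fun _ _ => SSpec.isOpen_iff_exists_fg
  tfae_have 2 → 3 := fun h p _ => SSpec.exists_closure_singleton_eq_of_isOpen_iff h p
  tfae_have 3 → 1 := fun h => SSpec.noetherianSpace_of_forall_closure_singleton_eq
    (SSpec.exists_closure_singleton_eq_of_isPrime h)
  tfae_have 3 → 4 := fun h _ => SSpec.isOpen_sInter_of_forall_closure_singleton_eq
    (SSpec.exists_closure_singleton_eq_of_isPrime h)
  tfae_have 4 → 3 := fun h p _ => SSpec.exists_closure_singleton_eq_of_isOpen_sInter h p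
  tfae_finish

/-- TFAE: (1) `Spec_S R` is noetherian for the `S`-flat topology;
(2) the `S`-flat open sets are exactly the `V_S(I)` with `I` finitely generated;
(3) for every prime `P` disjoint from `S`, `Λ(P) = D_S(f)` for some `f ∈ R`;
(4) arbitrary intersections of `S`-Zariski open sets are `S`-Zariski open. -/
theorem sFlat_noetherian_tfae {R : Type*} [CommRing R] [Nontrivial R] (S : Set R)
    (hS0 : (0 : R) ∉ S) (hS1 : (1 : R) ∈ S) (hSmul : ∀ s ∈ S, ∀ t ∈ S, s * t ∈ S) :
    List.TFAE
      [@TopologicalSpace.NoetherianSpace (SSpec S) (sFlatTop S),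
       ∀ U : Set (SSpec S),
         @IsOpen (SSpec S) (sFlatTop S) U ↔ ∃ I : Ideal R, I.FG ∧ U = SVar S I,
       ∀ p : SSpec S, p.1.IsPrime →
         ∃ f : R, @closure (SSpec S) (sFlatTop S) {p} = (SVar S (Ideal.span {f}))ᶜ,
       ∀ 𝒰 : Set (Set (SSpec S)), (∀ U ∈ 𝒰, @IsOpen (SSpec S) (sZariskiTop S) U) →
         @IsOpen (SSpec S) (sZariskiTop S) (⋂₀ 𝒰)] :=
  sFlat_noetherian_tfae_general S hS1 hSmul
end
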